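/- Let c_n(x;λ) denote monic Charlier polynomials, satisfying c_{n+1}(x;λ) = (x - n - λ) c_n(x;λ) - nλ c_{n-1}(x;λ), c_{-1} = 0, c_0 = 1, with λ > 0. Setting κ_n = n(Σ_{j≥n+1} λ^j/j!)/(Σ_{j≥n} λ^j/j!) and a_n(x) = c_n(x;λ) + κ_n c_{n-1}(x;λ), the polynomials a_n satisfy a_{n+1}(x) = (x - α_n) a_n(x) - α̂_{n-1} a_{n-1}(x), where α_n = n + λ + κ_n - κ_{n+1} and α̂_{n-1} = λ n (Σ_{j≥n+1} λ^j/j!)(Σ_{j≥n-1} λ^j/j!)/(Σ_{j≥n} λ^j/j!)². -/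

import Mathlib

open Polynomial

/-
For any monic recurrence `c_{n+1} = (X - β_n) c_n - γ_n c_{n-1}` and `a_n = c_n + κ_n c_{n-1}`,
expanding `(X - α_n) a_n` with the recurrence (at `n`, and at `n - 1` for `X c_{n-1}`) shows that
`a_{n+1} = (X - α_n) a_n - g a_{n-1}` for `α_n = β_n + κ_n - κ_{n+1}` as soon as the two scalar
identities `g = γ_n + κ_n (β_{n-1} - α_n)` and `g κ_{n-1} = κ_n γ_{n-1}` hold.
For Charlier (`β_n = n + λ`, `γ_n = n λ`) and the tail sums `S_n = Σ_{j ≥ n} λ^j / j!`, both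
reduce to `λ (S_n - S_{n+1}) = (n + 1) (S_{n+1} - S_{n+2})`, i.e. to
`λ · λ^n / n! = (n + 1) · λ^{n+1} / (n+1)!`.
Extending `κ_n = n S_{n+1} / S_n` to `κ_0 = 0` makes `n = 1` an instance of the general step.
-/

noncomputable def expTail (lam : ℝ) (n : ℕ) : ℝ := ∑' j : ℕ, lam ^ (j + n) / (j + n).factorial

lemma summable_pow_add_div_factorial (lam : ℝ) (n : ℕ) :
    Summable fun j : ℕ => lam ^ (j + n) / (j + n).factorial :=
  (Real.summable_pow_div_factorial lam).comp_injective (add_left_injective n)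

lemma expTail_pos {lam : ℝ} (hlam : 0 < lam) (n : ℕ) : 0 < expTail lam n :=
  (summable_pow_add_div_factorial lam n).tsum_pos (fun _ => by positivity) 0 (by positivity)

lemma expTail_eq_add_expTail_succ (lam : ℝ) (n : ℕ) :
    expTail lam n = lam ^ n / n.factorial + expTail lam (n + 1) := by
  rw [expTail, (summable_pow_add_div_factorial lam n).tsum_eq_zero_add, zero_add, expTail]
  simp only [add_right_comm _ 1 n, add_assoc]

lemma mul_expTail_sub_expTail_succ (lam : ℝ) (n : ℕ) :
    lam * (expTail lam n - expTail lam (n + 1))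
      = (n + 1) * (expTail lam (n + 1) - expTail lam (n + 2)) := by
  rw [expTail_eq_add_expTail_succ lam n, expTail_eq_add_expTail_succ lam (n + 1),
    Nat.factorial_succ, pow_succ]
  push_cast
  field_simp
  ring

section ConnectionCoeff

variable {K : Type*} [Field K]

def connectionCoeff (S : ℕ → K) (n : ℕ) : K := n * S (n + 1) / S n

@[simp] lemma connectionCoeff_zero (S : ℕ → K) : connectionCoeff S 0 = 0 := by
  simp [connectionCoeff]

variable {lam : K} {S : ℕ → K}

lemma mul_div_sq_eq_connectionCoeff (hS : ∀ n, S n ≠ 0)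
    (hrel : ∀ n : ℕ, lam * (S n - S (n + 1)) = (n + 1) * (S (n + 1) - S (n + 2))) (m : ℕ) :
    lam * (m + 1) * S (m + 2) * S m / S (m + 1) ^ 2
      = (m + 1) * lam + connectionCoeff S (m + 1)
        * (connectionCoeff S (m + 2) - connectionCoeff S (m + 1) - 1) := by
  have hrel_succ : lam * (S (m + 1) - S (m + 2)) = (m + 2) * (S (m + 2) - S (m + 3)) := by
    have := hrel (m + 1)
    push_cast at this
    linear_combination this
  have key : lam * S (m + 2) * S m = lam * S (m + 1) ^ 2 + (m + 2) * S (m + 3) * S (m + 1)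
      - (m + 1) * S (m + 2) ^ 2 - S (m + 2) * S (m + 1) := by
    linear_combination S (m + 2) * hrel m - S (m + 1) * hrel_succ
  have := hS (m + 1)
  have := hS (m + 2)
  simp only [connectionCoeff]
  push_cast
  field_simp
  linear_combination (m + 1) * key

lemma mul_div_sq_mul_connectionCoeff {m : ℕ} (hm : S m ≠ 0) (hm' : S (m + 1) ≠ 0) :
    lam * (m + 1) * S (m + 2) * S m / S (m + 1) ^ 2 * connectionCoeff S m
      = connectionCoeff S (m + 1) * (m * lam) := by
  simp only [connectionCoeff]
  push_cast
  field_simp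

end ConnectionCoeff

theorem three_term_recurrence_of_add_C_mul {R : Type*} [CommRing R]
    {p₀ p₁ p₂ p₃ a₁ a₂ a₃ : R[X]} {β₁ β₂ γ₁ γ₂ k₁ k₂ k₃ g : R}
    (hp₃ : p₃ = (X - C β₂) * p₂ - C γ₂ * p₁) (hp₂ : p₂ = (X - C β₁) * p₁ - C γ₁ * p₀)
    (ha₃ : a₃ = p₃ + C k₃ * p₂) (ha₂ : a₂ = p₂ + C k₂ * p₁) (ha₁ : a₁ = p₁ + C k₁ * p₀)
    (hg : g = γ₂ + k₂ * (β₁ - β₂ - k₂ + k₃)) (hgk : g * k₁ = k₂ * γ₁) :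
    a₃ = (X - C (β₂ + k₂ - k₃)) * a₂ - C g * a₁ := by
  subst ha₃ ha₂ ha₁ hp₃ hg
  have hC := congrArg C hgk
  simp only [map_mul, map_add, map_sub] at hC ⊢
  linear_combination C k₂ * hp₂ + p₀ * hC

/-- For Charlier polynomials `c_n`, the combinations `a_n = c_n + κ_n c_{n-1}` with the tail-sum
connection coefficients satisfy a three-term recurrence with explicit coefficients. -/
theorem stmt_8 (lam : ℝ) (hlam : 0 < lam)
    (S : ℕ → ℝ) (hS : ∀ n, S n = ∑' j : ℕ, lam ^ (j + n) / Nat.factorial (j + n))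
    (κ : ℕ → ℝ) (hκ : ∀ n : ℕ, 1 ≤ n → κ n = n * S (n + 1) / S n)
    (c a : ℕ → Polynomial ℝ)
    (hc0 : c 0 = 1) (hc1 : c 1 = X - C lam)
    (hcrec : ∀ n : ℕ, 1 ≤ n →
      c (n + 1) = (X - C ((n : ℝ) + lam)) * c n - C ((n : ℝ) * lam) * c (n - 1))
    (ha0 : a 0 = 1)
    (ha : ∀ n : ℕ, 1 ≤ n → a n = c n + C (κ n) * c (n - 1)) :
    ∀ n : ℕ, 1 ≤ n →
      a (n + 1) = (X - C ((n : ℝ) + lam + κ n - κ (n + 1))) * a n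
        - C (lam * n * S (n + 1) * S (n - 1) / (S n) ^ 2) * a (n - 1) := by
  obtain rfl : S = expTail lam := funext hS
  have hSne (n : ℕ) : expTail lam n ≠ 0 := (expTail_pos hlam n).ne'
  have hκ' (n : ℕ) (hn : 1 ≤ n) : κ n = connectionCoeff (expTail lam) n := hκ n hn
  -- at `n = 0` the junk values `c (0 - 1)` are multiplied by `0 * lam` and by `κ_0 = 0`
  have hc (n : ℕ) : c (n + 1) = (X - C ((n : ℝ) + lam)) * c n - C ((n : ℝ) * lam) * c (n - 1) := by
    rcases n with _ | n
    · simp [hc0, hc1]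
    · exact hcrec _ n.succ_pos
  have ha' (n : ℕ) : a n = c n + C (connectionCoeff (expTail lam) n) * c (n - 1) := by
    rcases n with _ | n
    · simp [ha0, hc0]
    · rw [ha _ n.succ_pos, hκ' _ n.succ_pos]
  rintro n hn
  obtain ⟨m, rfl⟩ : ∃ m, n = m + 1 := ⟨n - 1, by omega⟩
  rw [hκ' (m + 1) (by omega), hκ' (m + 2) (by omega)]
  have hg := mul_div_sq_eq_connectionCoeff hSne (mul_expTail_sub_expTail_succ lam) m
  refine three_term_recurrence_of_add_C_mul (hc (m + 1)) (hc m) (ha' (m + 2)) (ha' (m + 1)) (ha' m)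
    ?_ ?_ <;> push_cast [Nat.add_sub_cancel]
  · rw [hg]
    ring
  · exact mul_div_sq_mul_connectionCoeff (hSne m) (hSne (m + 1))
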